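/- arXiv:1602.01531 — 2 statements merged into one kernel-verified Lean document; each statement's English description precedes it below -/
import Mathlib

section
/- Under the step-3 bracket condition, for every smooth function f on M and every first-order bracket field Y'_η = [e_i,e_j], one has the pointwise estimate |[L,Y'_η]f| ≤ 2 Σ_{i=1}^d Σ_{α∈Λ} |e_i(Y_α f)| + d·a·Σ_{j=1}^d |e_j f| + d(b+c) Σ_{α∈Λ} |Y_α f|. -/
/-! For any vector field `W`, `e_k² W - W e_k² = 2 e_k [e_k, W] - [e_k, [e_k, W]]`, so
`[L, W] = ∑_k (2 e_k [e_k, W] - [e_k, [e_k, W]])`. For `W = Y'_{ij}` the field `[e_k, W]` is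
`Y''_{kij}`, giving the first term of the bound, and `[e_k, [e_k, W]]` is a triple bracket,
which the step-3 condition rewrites in terms of the `e_n` and `Y_α` with coefficients bounded
by `a`, `b`, `c`. -/

open scoped Manifold
open Finset

local notation "∞" => (⊤ : ℕ∞)

noncomputable section

variable {E : Type*} [NormedAddCommGroup E] [NormedSpace ℝ E]
  {H : Type*} [TopologicalSpace H] {I : ModelWithCorners ℝ E H}
  {M : Type*} [TopologicalSpace M] [ChartedSpace H M]
  [IsManifold I ((⊤ : ℕ∞) : WithTop ℕ∞) M] [CompactSpace M] [ConnectedSpace M]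
  {d : ℕ} {Λ : Type*} [Fintype Λ]

/-- The operator `L = ∑ j, e j ∘ e j` (sum of squares of vector fields),
where vector fields are encoded as derivations on smooth functions. -/
def Lop (e : Fin d → Derivation ℝ C^∞⟮I, M; ℝ⟯ C^∞⟮I, M; ℝ⟯)
    (f : C^∞⟮I, M; ℝ⟯) : C^∞⟮I, M; ℝ⟯ :=
  ∑ j, e j (e j f)

/-- `Γ(f,f) = ∑ j |e j f|²`. -/
def GammaOp (e : Fin d → Derivation ℝ C^∞⟮I, M; ℝ⟯ C^∞⟮I, M; ℝ⟯)
    (f : C^∞⟮I, M; ℝ⟯) : C^∞⟮I, M; ℝ⟯ :=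
  ∑ j, e j f * e j f

/-- `Γ^Z(f,f) = ∑ α |Y α f|²`. -/
def GammaZOp (Y : Λ → Derivation ℝ C^∞⟮I, M; ℝ⟯ C^∞⟮I, M; ℝ⟯)
    (f : C^∞⟮I, M; ℝ⟯) : C^∞⟮I, M; ℝ⟯ :=
  ∑ α, Y α f * Y α f

/-- `Γ₂(f,f) = (1/2)[L(Γ(f,f)) − 2 ∑ j (e j f)(e j (L f))]`. -/
def Gamma2Op (e : Fin d → Derivation ℝ C^∞⟮I, M; ℝ⟯ C^∞⟮I, M; ℝ⟯)
    (f : C^∞⟮I, M; ℝ⟯) : C^∞⟮I, M; ℝ⟯ :=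
  (1 / 2 : ℝ) • (Lop e (GammaOp e f) - 2 • ∑ j, e j f * e j (Lop e f))

/-- `Γ₂^Z(f,f) = (1/2)[L(Γ^Z(f,f)) − 2 ∑ α (Y α f)(Y α (L f))]`. -/
def Gamma2ZOp (e : Fin d → Derivation ℝ C^∞⟮I, M; ℝ⟯ C^∞⟮I, M; ℝ⟯)
    (Y : Λ → Derivation ℝ C^∞⟮I, M; ℝ⟯ C^∞⟮I, M; ℝ⟯)
    (f : C^∞⟮I, M; ℝ⟯) : C^∞⟮I, M; ℝ⟯ :=
  (1 / 2 : ℝ) • (Lop e (GammaZOp Y f) - 2 • ∑ α, Y α f * Y α (Lop e f))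

/-- Index set for the bracket vector fields in the step-3 situation: first-order brackets
`Y'_{(i,j)} = [e_i,e_j]` and second-order brackets `Y''_{(i,j,k)} = [e_i,[e_j,e_k]]`. -/
abbrev Step3Index (d : ℕ) := (Fin d × Fin d) ⊕ (Fin d × Fin d × Fin d)

/-- The bracket vector fields `Y'_{(i,j)} = [e_i,e_j]` and `Y''_{(i,j,k)} = [e_i,[e_j,e_k]]`. -/
def Yfields (e : Fin d → Derivation ℝ C^∞⟮I, M; ℝ⟯ C^∞⟮I, M; ℝ⟯) :
    Step3Index d → Derivation ℝ C^∞⟮I, M; ℝ⟯ C^∞⟮I, M; ℝ⟯ :=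
  Sum.elim (fun p => ⁅e p.1, e p.2⁆) (fun p => ⁅e p.1, ⁅e p.2.1, e p.2.2⁆⁆)

/-- The step-3 bracket condition: every triple bracket `[e_i,[e_j,[e_k,e_l]]]` is a combination
`a^n_{ijkl} e_n + b^η_{ijkl} Y'_η + c^A_{ijkl} Y''_A` with smooth coefficient functions. -/
def Step3Bracket (e : Fin d → Derivation ℝ C^∞⟮I, M; ℝ⟯ C^∞⟮I, M; ℝ⟯)
    (ca : Fin d → Fin d → Fin d → Fin d → Fin d → C^∞⟮I, M; ℝ⟯)
    (cb : Fin d → Fin d → Fin d → Fin d → Fin d × Fin d → C^∞⟮I, M; ℝ⟯)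
    (cc : Fin d → Fin d → Fin d → Fin d → Fin d × Fin d × Fin d → C^∞⟮I, M; ℝ⟯) : Prop :=
  ∀ i j k l, ⁅e i, ⁅e j, ⁅e k, e l⁆⁆⁆ =
    (∑ n, ca i j k l n • e n)
      + (∑ η : Fin d × Fin d, cb i j k l η • Yfields e (Sum.inl η))
      + (∑ A : Fin d × Fin d × Fin d, cc i j k l A • Yfields e (Sum.inr A))

theorem Derivation.commutator_sq_apply {R A : Type*} [CommRing R] [CommRing A] [Algebra R A]
    (D W : Derivation R A A) (f : A) :
    D (D (W f)) - W (D (D f)) = 2 • D (⁅D, W⁆ f) - ⁅D, ⁅D, W⁆⁆ f := by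
  simp only [Derivation.commutator_apply, map_sub]
  abel

theorem abs_sum_mul_le_mul_sum_abs {ι K : Type*} [CommRing K] [LinearOrder K]
    [IsStrictOrderedRing K] (s : Finset ι) {c g : ι → K} {a : K} (hc : ∀ n ∈ s, |c n| ≤ a) :
    |∑ n ∈ s, c n * g n| ≤ a * ∑ n ∈ s, |g n| := by
  rw [Finset.mul_sum]
  refine (abs_sum_le_sum_abs _ _).trans (Finset.sum_le_sum fun n hn => ?_)
  rw [abs_mul]
  exact mul_le_mul_of_nonneg_right (hc n hn) (abs_nonneg _)

omit [IsManifold I ((⊤ : ℕ∞) : WithTop ℕ∞) M] [CompactSpace M] [ConnectedSpace M] in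
theorem sum_smul_derivation_apply_apply {ι : Type*} (s : Finset ι) (g : ι → C^∞⟮I, M; ℝ⟯)
    (D : ι → Derivation ℝ C^∞⟮I, M; ℝ⟯ C^∞⟮I, M; ℝ⟯) (f : C^∞⟮I, M; ℝ⟯) (x : M) :
    (∑ n ∈ s, g n • D n) f x = ∑ n ∈ s, g n x * D n f x := by
  rw [← Derivation.coeFnAddMonoidHom_apply, map_sum, Finset.sum_apply]
  exact map_sum (ContMDiffMap.evalRingHom x) _ s

omit [IsManifold I ((⊤ : ℕ∞) : WithTop ℕ∞) M] [CompactSpace M] [ConnectedSpace M] in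
theorem Lop_commutator_apply (e : Fin d → Derivation ℝ C^∞⟮I, M; ℝ⟯ C^∞⟮I, M; ℝ⟯)
    (W : Derivation ℝ C^∞⟮I, M; ℝ⟯ C^∞⟮I, M; ℝ⟯) (f : C^∞⟮I, M; ℝ⟯) :
    Lop e (W f) - W (Lop e f) = ∑ k, (2 • e k (⁅e k, W⁆ f) - ⁅e k, ⁅e k, W⁆⁆ f) := by
  simp only [Lop, map_sum, ← Finset.sum_sub_distrib, Derivation.commutator_sq_apply]

omit [IsManifold I ((⊤ : ℕ∞) : WithTop ℕ∞) M] [CompactSpace M] [ConnectedSpace M] in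
theorem Step3Bracket.abs_apply_le {e : Fin d → Derivation ℝ C^∞⟮I, M; ℝ⟯ C^∞⟮I, M; ℝ⟯}
    {ca : Fin d → Fin d → Fin d → Fin d → Fin d → C^∞⟮I, M; ℝ⟯}
    {cb : Fin d → Fin d → Fin d → Fin d → Fin d × Fin d → C^∞⟮I, M; ℝ⟯}
    {cc : Fin d → Fin d → Fin d → Fin d → Fin d × Fin d × Fin d → C^∞⟮I, M; ℝ⟯}
    (hbr : Step3Bracket e ca cb cc) {a b c : ℝ}
    (hca : ∀ i j k l n (x : M), |ca i j k l n x| ≤ a)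
    (hcb : ∀ i j k l η (x : M), |cb i j k l η x| ≤ b)
    (hcc : ∀ i j k l A (x : M), |cc i j k l A x| ≤ c)
    (f : C^∞⟮I, M; ℝ⟯) (i j k l : Fin d) (x : M) :
    |⁅e i, ⁅e j, ⁅e k, e l⁆⁆⁆ f x| ≤
      a * ∑ n, |e n f x| + (b + c) * ∑ α : Step3Index d, |Yfields e α f x| := by
  have hb : 0 ≤ b := (abs_nonneg _).trans (hcb i j k l (i, j) x)
  have hc : 0 ≤ c := (abs_nonneg _).trans (hcc i j k l (i, j, k) x)
  set Sb := ∑ η : Fin d × Fin d, |Yfields e (Sum.inl η) f x|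
  set Sc := ∑ A : Fin d × Fin d × Fin d, |Yfields e (Sum.inr A) f x|
  have hSb : 0 ≤ Sb := Finset.sum_nonneg fun _ _ => abs_nonneg _
  have hSc : 0 ≤ Sc := Finset.sum_nonneg fun _ _ => abs_nonneg _
  rw [hbr, Derivation.add_apply, Derivation.add_apply, ContMDiffMap.coe_add,
    ContMDiffMap.coe_add, Pi.add_apply, Pi.add_apply, sum_smul_derivation_apply_apply,
    sum_smul_derivation_apply_apply, sum_smul_derivation_apply_apply, Fintype.sum_sum_type]
  calc _ ≤ a * ∑ n, |e n f x| + b * Sb + c * Sc :=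
        (abs_add_three _ _ _).trans <| add_le_add_three
          (abs_sum_mul_le_mul_sum_abs _ fun n _ => hca i j k l n x)
          (abs_sum_mul_le_mul_sum_abs _ fun η _ => hcb i j k l η x)
          (abs_sum_mul_le_mul_sum_abs _ fun A _ => hcc i j k l A x)
    _ ≤ a * ∑ n, |e n f x| + (b + c) * (Sb + Sc) := by nlinarith

set_option linter.unusedSectionVars false in
/-- Under the step-3 bracket condition with coefficient bounds `a, b, c`, for every smooth `f`
and every first-order bracket field `Y'_η = [e_i,e_j]`, pointwise:
`|[L,Y'_η]f| ≤ 2 ∑_{i,α} |e_i(Y_α f)| + d·a·∑_j |e_j f| + d(b+c) ∑_α |Y_α f|`. -/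
theorem commutator_L_Yprime_estimate
    (e : Fin d → Derivation ℝ C^∞⟮I, M; ℝ⟯ C^∞⟮I, M; ℝ⟯)
    (ca : Fin d → Fin d → Fin d → Fin d → Fin d → C^∞⟮I, M; ℝ⟯)
    (cb : Fin d → Fin d → Fin d → Fin d → Fin d × Fin d → C^∞⟮I, M; ℝ⟯)
    (cc : Fin d → Fin d → Fin d → Fin d → Fin d × Fin d × Fin d → C^∞⟮I, M; ℝ⟯)
    (hbr : Step3Bracket e ca cb cc)
    (a b c : ℝ)
    (hca : ∀ i j k l n (x : M), |ca i j k l n x| ≤ a)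
    (hcb : ∀ i j k l η (x : M), |cb i j k l η x| ≤ b)
    (hcc : ∀ i j k l A (x : M), |cc i j k l A x| ≤ c)
    (f : C^∞⟮I, M; ℝ⟯) (i j : Fin d) (x : M) :
    |Lop e (Yfields e (Sum.inl (i, j)) f) x - Yfields e (Sum.inl (i, j)) (Lop e f) x| ≤
      2 * ∑ i', ∑ α : Step3Index d, |e i' (Yfields e α f) x|
        + (d : ℝ) * a * ∑ j', |e j' f x|
        + (d : ℝ) * (b + c) * ∑ α : Step3Index d, |Yfields e α f x| := by
  set W := Yfields e (Sum.inl (i, j))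
  set B := a * ∑ n, |e n f x| + (b + c) * ∑ α : Step3Index d, |Yfields e α f x|
  have hterm (k : Fin d) : |(2 • e k (⁅e k, W⁆ f) - ⁅e k, ⁅e k, W⁆⁆ f) x| ≤
      2 * ∑ α : Step3Index d, |e k (Yfields e α f) x| + B := by
    have hZ : |e k (⁅e k, W⁆ f) x| ≤ ∑ α : Step3Index d, |e k (Yfields e α f) x| :=
      Finset.single_le_sum (f := fun α => |e k (Yfields e α f) x|)
        (fun _ _ => abs_nonneg _) (Finset.mem_univ (Sum.inr (k, i, j)))
    have hT : |⁅e k, ⁅e k, W⁆⁆ f x| ≤ B := hbr.abs_apply_le hca hcb hcc f k k i j x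
    simp only [ContMDiffMap.coe_sub, ContMDiffMap.coe_nsmul, Pi.sub_apply, Pi.smul_apply]
    rw [nsmul_eq_mul, Nat.cast_ofNat]
    calc _ ≤ |2 * e k (⁅e k, W⁆ f) x| + |⁅e k, ⁅e k, W⁆⁆ f x| := abs_sub _ _
      _ ≤ _ := by rw [abs_mul, abs_two]; linarith
  have hcomm := congrArg (· x) (Lop_commutator_apply e W f)
  simp only [ContMDiffMap.coe_sub, Pi.sub_apply] at hcomm
  calc _ = |∑ k, (2 • e k (⁅e k, W⁆ f) - ⁅e k, ⁅e k, W⁆⁆ f) x| := by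
        rw [hcomm]; exact congrArg _ (map_sum (ContMDiffMap.evalRingHom x) _ _)
    _ ≤ ∑ k, (2 * ∑ α : Step3Index d, |e k (Yfields e α f) x| + B) :=
        (abs_sum_le_sum_abs _ _).trans (Finset.sum_le_sum fun k _ => hterm k)
    _ = _ := by
        rw [Finset.sum_add_distrib, ← Finset.mul_sum, Finset.sum_const, Finset.card_univ,
          Fintype.card_fin, nsmul_eq_mul]
        ring
end
end

section
/- Under the step-3 bracket condition, for every smooth function f on M and every second-order bracket field Y''_A = [e_i,[e_j,e_k]], one has the pointwise estimate |[L,Y''_A]f| ≤ 2a Σ_{i,j=1}^d |e_i e_j f| + 2(b+c) Σ_{i=1}^d Σ_{α∈Λ} |e_i Y_α f| + d(a' + a c d⁴) Σ_{j=1}^d |e_j f| + (d b' + b c d⁵ + d c' + b + c² d⁴) Σ_{α∈Λ} |Y_α f|. -/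
open scoped Manifold
open Finset

local notation "∞" => (⊤ : ℕ∞)

noncomputable section

variable {E : Type*} [NormedAddCommGroup E] [NormedSpace ℝ E]
  {H : Type*} [TopologicalSpace H] {I : ModelWithCorners ℝ E H}
  {M : Type*} [TopologicalSpace M] [ChartedSpace H M]
  [IsManifold I ∞ M] [CompactSpace M] [ConnectedSpace M]
  {d : ℕ} {Λ : Type*} [Fintype Λ]

/-!
With `Y = [e_i,[e_j,e_k]]` and `Z_h = [e_h, Y]` one has `[L, Y] = ∑_h (e_h Z_h + Z_h e_h)`.
Each `Z_h` is a triple bracket, so the step-3 condition writes it as a combination of the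
`e_n`, `Y'_η`, `Y''_A` with coefficients bounded by `a, b, c`. In `e_h (Z_h f)` the Leibniz rule
brings in the derivative bounds `a', b', c'`. In `Z_h (e_h f)` the fields `Y'_η` and `Y''_A` are
commuted past `e_h`: `[e_h, Y'_η]` is again some `Y''`, and `[e_h, Y''_A]` is a triple bracket,
expanded once more; summing over the `d³` indices `A` and the `d` indices `h` produces the
products of coefficient bounds and the powers of `d`.
-/

theorem abs_sum_mul_le_mul_sum_abs_s8 {ι : Type*} (s : Finset ι) (κ w : ι → ℝ) {K : ℝ}
    (hκ : ∀ i ∈ s, |κ i| ≤ K) : |∑ i ∈ s, κ i * w i| ≤ K * ∑ i ∈ s, |w i| :=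
  calc |∑ i ∈ s, κ i * w i| ≤ ∑ i ∈ s, |κ i| * |w i| := by
        simpa only [abs_mul] using abs_sum_le_sum_abs (fun i => κ i * w i) s
    _ ≤ ∑ i ∈ s, K * |w i| :=
        sum_le_sum fun i hi => mul_le_mul_of_nonneg_right (hκ i hi) (abs_nonneg _)
    _ = K * ∑ i ∈ s, |w i| := (mul_sum ..).symm

namespace Derivation

variable {R A : Type*} [CommRing R] [CommRing A] [Algebra R A]

theorem sum_smul_apply {ι : Type*} (s : Finset ι) (κ : ι → A) (X : ι → Derivation R A A)
    (g : A) : (∑ n ∈ s, κ n • X n) g = ∑ n ∈ s, κ n * X n g := by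
  rw [← coeFnAddMonoidHom_apply, map_sum, Finset.sum_apply]
  rfl

theorem apply_apply_eq_sub_commutator_apply (D X : Derivation R A A) (g : A) :
    X (D g) = D (X g) - ⁅D, X⁆ g := by
  rw [commutator_apply]
  abel

theorem commutator_sum_sq_apply {ι : Type*} (s : Finset ι) (e : ι → Derivation R A A)
    (Y : Derivation R A A) (f : A) :
    ∑ h ∈ s, e h (e h (Y f)) - Y (∑ h ∈ s, e h (e h f)) =
      ∑ h ∈ s, (e h (⁅e h, Y⁆ f) + ⁅e h, Y⁆ (e h f)) := by
  rw [map_sum, ← sum_sub_distrib]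
  refine sum_congr rfl fun h _ => ?_
  rw [commutator_apply, commutator_apply, map_sub]
  abel

end Derivation

section SmoothFunctions

variable {M : Type*} [TopologicalSpace M] [ChartedSpace H M] (x : M)

theorem ContMDiffMap.sum_apply {n : WithTop ℕ∞} {ι : Type*} (s : Finset ι)
    (g : ι → C^n⟮I, M; ℝ⟯) : (∑ i ∈ s, g i) x = ∑ i ∈ s, g i x :=
  map_sum (ContMDiffMap.evalRingHom x) g s

variable {ι : Type*} (s : Finset ι) (κ : ι → C^∞⟮I, M; ℝ⟯)
  (X : ι → Derivation ℝ C^∞⟮I, M; ℝ⟯ C^∞⟮I, M; ℝ⟯) (g : C^∞⟮I, M; ℝ⟯) {K K' : ℝ}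

theorem abs_sum_smul_apply_le (hκ : ∀ n ∈ s, |κ n x| ≤ K) :
    |(∑ n ∈ s, κ n • X n) g x| ≤ K * ∑ n ∈ s, |X n g x| := by
  rw [Derivation.sum_smul_apply, ContMDiffMap.sum_apply]
  exact abs_sum_mul_le_mul_sum_abs_s8 s _ _ hκ

theorem abs_apply_sum_smul_apply_le (D : Derivation ℝ C^∞⟮I, M; ℝ⟯ C^∞⟮I, M; ℝ⟯)
    (hκ : ∀ n ∈ s, |κ n x| ≤ K) (hDκ : ∀ n ∈ s, |D (κ n) x| ≤ K') :
    |D ((∑ n ∈ s, κ n • X n) g) x| ≤ K * ∑ n ∈ s, |D (X n g) x| + K' * ∑ n ∈ s, |X n g x| := by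
  have hleibniz : D ((∑ n ∈ s, κ n • X n) g) x =
      ∑ n ∈ s, κ n x * D (X n g) x + ∑ n ∈ s, D (κ n) x * X n g x := by
    simp only [Derivation.sum_smul_apply, map_sum, Derivation.leibniz, smul_eq_mul,
      ContMDiffMap.sum_apply, ← sum_add_distrib]
    refine sum_congr rfl fun n _ => ?_
    simp only [ContMDiffMap.coe_add, ContMDiffMap.coe_mul, Pi.add_apply, Pi.mul_apply]
    ring
  rw [hleibniz]
  exact (abs_add_le _ _).trans (add_le_add (abs_sum_mul_le_mul_sum_abs_s8 s _ _ hκ)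
    (abs_sum_mul_le_mul_sum_abs_s8 s _ _ hDκ))

end SmoothFunctions

section Step3

variable {M : Type*} [TopologicalSpace M] [ChartedSpace H M]
  {e : Fin d → Derivation ℝ C^∞⟮I, M; ℝ⟯ C^∞⟮I, M; ℝ⟯}
  {ca : Fin d → Fin d → Fin d → Fin d → Fin d → C^∞⟮I, M; ℝ⟯}
  {cb : Fin d → Fin d → Fin d → Fin d → Fin d × Fin d → C^∞⟮I, M; ℝ⟯}
  {cc : Fin d → Fin d → Fin d → Fin d → Fin d × Fin d × Fin d → C^∞⟮I, M; ℝ⟯}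
  {x : M} {a a' b b' c c' : ℝ}

theorem Step3Bracket.abs_tripleBracket_apply_le (hbr : Step3Bracket e ca cb cc)
    (hca : ∀ i j k l n, |ca i j k l n x| ≤ a) (hcb : ∀ i j k l η, |cb i j k l η x| ≤ b)
    (hcc : ∀ i j k l A, |cc i j k l A x| ≤ c) (i j k l : Fin d) (g : C^∞⟮I, M; ℝ⟯) :
    |⁅e i, ⁅e j, ⁅e k, e l⁆⁆⁆ g x| ≤
      a * ∑ n, |e n g x| + b * ∑ η, |Yfields e (.inl η) g x|
        + c * ∑ A, |Yfields e (.inr A) g x| := by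
  rw [hbr]
  simp only [Derivation.add_apply, ContMDiffMap.coe_add, Pi.add_apply]
  exact (abs_add_three _ _ _).trans <| add_le_add_three
    (abs_sum_smul_apply_le x _ _ _ g fun n _ => hca i j k l n)
    (abs_sum_smul_apply_le x _ _ _ g fun η _ => hcb i j k l η)
    (abs_sum_smul_apply_le x _ _ _ g fun A _ => hcc i j k l A)

theorem Step3Bracket.abs_apply_tripleBracket_apply_le (hbr : Step3Bracket e ca cb cc)
    (D : Derivation ℝ C^∞⟮I, M; ℝ⟯ C^∞⟮I, M; ℝ⟯)
    (hca : ∀ i j k l n, |ca i j k l n x| ≤ a) (hcb : ∀ i j k l η, |cb i j k l η x| ≤ b)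
    (hcc : ∀ i j k l A, |cc i j k l A x| ≤ c) (hca' : ∀ i j k l n, |D (ca i j k l n) x| ≤ a')
    (hcb' : ∀ i j k l η, |D (cb i j k l η) x| ≤ b')
    (hcc' : ∀ i j k l A, |D (cc i j k l A) x| ≤ c') (i j k l : Fin d) (g : C^∞⟮I, M; ℝ⟯) :
    |D (⁅e i, ⁅e j, ⁅e k, e l⁆⁆⁆ g) x| ≤
      a * ∑ n, |D (e n g) x| + a' * ∑ n, |e n g x|
        + (b * ∑ η, |D (Yfields e (.inl η) g) x| + b' * ∑ η, |Yfields e (.inl η) g x|)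
        + (c * ∑ A, |D (Yfields e (.inr A) g) x| + c' * ∑ A, |Yfields e (.inr A) g x|) := by
  rw [hbr]
  simp only [Derivation.add_apply, map_add, ContMDiffMap.coe_add, Pi.add_apply]
  exact (abs_add_three _ _ _).trans <| add_le_add_three
    (abs_apply_sum_smul_apply_le x _ _ _ g D (fun n _ => hca i j k l n) fun n _ => hca' i j k l n)
    (abs_apply_sum_smul_apply_le x _ _ _ g D (fun η _ => hcb i j k l η) fun η _ => hcb' i j k l η)
    (abs_apply_sum_smul_apply_le x _ _ _ g D (fun A _ => hcc i j k l A) fun A _ => hcc' i j k l A)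

theorem Step3Bracket.abs_tripleBracket_apply_apply_le (hbr : Step3Bracket e ca cb cc)
    (hca : ∀ i j k l n, |ca i j k l n x| ≤ a) (hcb : ∀ i j k l η, |cb i j k l η x| ≤ b)
    (hcc : ∀ i j k l A, |cc i j k l A x| ≤ c) (i j k l m : Fin d) (g : C^∞⟮I, M; ℝ⟯) :
    |⁅e i, ⁅e j, ⁅e k, e l⁆⁆⁆ (e m g) x| ≤
      a * ∑ n, |e n (e m g) x|
        + b * (∑ η, |e m (Yfields e (.inl η) g) x|
          + ∑ η : Fin d × Fin d, |Yfields e (.inr (m, η.1, η.2)) g x|)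
        + c * (∑ A, |e m (Yfields e (.inr A) g) x| + (d : ℝ) ^ 3 * (a * ∑ n, |e n g x|
          + b * ∑ η, |Yfields e (.inl η) g x| + c * ∑ A, |Yfields e (.inr A) g x|)) := by
  have hb : 0 ≤ b := (abs_nonneg _).trans (hcb m m m m (m, m))
  have hc : 0 ≤ c := (abs_nonneg _).trans (hcc m m m m (m, m, m))
  have hY' : ∀ η, |Yfields e (.inl η) (e m g) x| ≤
      |e m (Yfields e (.inl η) g) x| + |Yfields e (.inr (m, η.1, η.2)) g x| := fun η => by
    rw [Derivation.apply_apply_eq_sub_commutator_apply (e m)]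
    exact abs_sub _ _
  have hY'' : ∀ A, |Yfields e (.inr A) (e m g) x| ≤ |e m (Yfields e (.inr A) g) x| +
      (a * ∑ n, |e n g x| + b * ∑ η, |Yfields e (.inl η) g x|
        + c * ∑ A, |Yfields e (.inr A) g x|) := fun ⟨p, q, r⟩ => by
    rw [Derivation.apply_apply_eq_sub_commutator_apply (e m)]
    exact (abs_sub _ _).trans
      (add_le_add le_rfl (hbr.abs_tripleBracket_apply_le hca hcb hcc m p q r g))
  calc _ ≤ _ := hbr.abs_tripleBracket_apply_le hca hcb hcc i j k l (e m g)
    _ ≤ _ := by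
      gcongr
      · exact (sum_le_sum fun η _ => hY' η).trans_eq sum_add_distrib
      · refine (sum_le_sum fun A _ => hY'' A).trans_eq ?_
        simp only [sum_add_distrib, sum_const, card_univ, Fintype.card_prod, Fintype.card_fin,
          nsmul_eq_mul]
        push_cast
        ring

theorem Step3Bracket.abs_commutator_Lop_apply_le (hbr : Step3Bracket e ca cb cc)
    (hca : ∀ i j k l n, |ca i j k l n x| ≤ a) (hcb : ∀ i j k l η, |cb i j k l η x| ≤ b)
    (hcc : ∀ i j k l A, |cc i j k l A x| ≤ c)
    (hca' : ∀ h i j k l n, |e h (ca i j k l n) x| ≤ a')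
    (hcb' : ∀ h i j k l η, |e h (cb i j k l η) x| ≤ b')
    (hcc' : ∀ h i j k l A, |e h (cc i j k l A) x| ≤ c') (i j k : Fin d) (f : C^∞⟮I, M; ℝ⟯) :
    |Lop e (Yfields e (.inr (i, j, k)) f) x - Yfields e (.inr (i, j, k)) (Lop e f) x| ≤
      2 * a * ∑ h, ∑ n, |e h (e n f) x|
        + 2 * b * ∑ h, ∑ η, |e h (Yfields e (.inl η) f) x|
        + 2 * c * ∑ h, ∑ A, |e h (Yfields e (.inr A) f) x|
        + b * ∑ A, |Yfields e (.inr A) f x|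
        + d * (a' * ∑ n, |e n f x| + b' * ∑ η, |Yfields e (.inl η) f x|
          + c' * ∑ A, |Yfields e (.inr A) f x|)
        + c * d ^ 4 * (a * ∑ n, |e n f x| + b * ∑ η, |Yfields e (.inl η) f x|
          + c * ∑ A, |Yfields e (.inr A) f x|) := by
  set Y := Yfields e (.inr (i, j, k))
  have hcomm : Lop e (Y f) x - Y (Lop e f) x =
      ∑ h, (e h (⁅e h, Y⁆ f) x + ⁅e h, Y⁆ (e h f) x) := by
    change (Lop e (Y f) - Y (Lop e f)) x = _
    rw [Lop, Lop, Derivation.commutator_sum_sq_apply, ContMDiffMap.sum_apply]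
    rfl
  rw [hcomm]
  refine (abs_sum_le_sum_abs _ _).trans <| (sum_le_sum fun h _ => (abs_add_le _ _).trans
    (add_le_add
      (hbr.abs_apply_tripleBracket_apply_le (e h) hca hcb hcc (hca' h) (hcb' h) (hcc' h) h i j k f)
      (hbr.abs_tripleBracket_apply_apply_le hca hcb hcc h i j k h f))).trans_eq ?_
  simp only [sum_add_distrib, ← mul_sum, sum_const, card_univ, Fintype.card_fin, nsmul_eq_mul]
  rw [sum_comm (f := fun h n => |e n (e h f) x|)]
  have hW : ∑ m, ∑ η : Fin d × Fin d, |Yfields e (.inr (m, η.1, η.2)) f x| =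
      ∑ A, |Yfields e (.inr A) f x| :=
    (Fintype.sum_prod_type fun A => |Yfields e (.inr A) f x|).symm
  rw [hW]
  ring

end Step3

/-- Under the step-3 bracket condition with coefficient bounds `a, a', b, b', c, c'`, for every
smooth `f` and every second-order bracket field `Y''_A = [e_i,[e_j,e_k]]`, pointwise:
`|[L,Y''_A]f| ≤ 2a ∑_{i,j} |e_i e_j f| + 2(b+c) ∑_{i,α} |e_i Y_α f|
  + d(a' + acd⁴) ∑_j |e_j f| + (db' + bcd⁵ + dc' + b + c²d⁴) ∑_α |Y_α f|`. -/
theorem commutator_L_Ydoubleprime_estimate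
    (e : Fin d → Derivation ℝ C^∞⟮I, M; ℝ⟯ C^∞⟮I, M; ℝ⟯)
    (ca : Fin d → Fin d → Fin d → Fin d → Fin d → C^∞⟮I, M; ℝ⟯)
    (cb : Fin d → Fin d → Fin d → Fin d → Fin d × Fin d → C^∞⟮I, M; ℝ⟯)
    (cc : Fin d → Fin d → Fin d → Fin d → Fin d × Fin d × Fin d → C^∞⟮I, M; ℝ⟯)
    (hbr : Step3Bracket e ca cb cc)
    (a a' b b' c c' : ℝ)
    (hca : ∀ i j k l n (x : M), |ca i j k l n x| ≤ a)
    (hcb : ∀ i j k l η (x : M), |cb i j k l η x| ≤ b)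
    (hcc : ∀ i j k l A (x : M), |cc i j k l A x| ≤ c)
    (hca' : ∀ h i j k l n (x : M), |e h (ca i j k l n) x| ≤ a')
    (hcb' : ∀ h i j k l η (x : M), |e h (cb i j k l η) x| ≤ b')
    (hcc' : ∀ h i j k l A (x : M), |e h (cc i j k l A) x| ≤ c')
    (f : C^∞⟮I, M; ℝ⟯) (i j k : Fin d) (x : M) :
    |Lop e (Yfields e (Sum.inr (i, j, k)) f) x
        - Yfields e (Sum.inr (i, j, k)) (Lop e f) x| ≤
      2 * a * ∑ i', ∑ j', |e i' (e j' f) x|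
        + 2 * (b + c) * ∑ i', ∑ α : Step3Index d, |e i' (Yfields e α f) x|
        + (d : ℝ) * (a' + a * c * (d : ℝ) ^ 4) * ∑ j', |e j' f x|
        + ((d : ℝ) * b' + b * c * (d : ℝ) ^ 5 + (d : ℝ) * c' + b + c ^ 2 * (d : ℝ) ^ 4)
            * ∑ α : Step3Index d, |Yfields e α f x| := by
  have ha : 0 ≤ a := (abs_nonneg _).trans (hca i i i i i x)
  have hb : 0 ≤ b := (abs_nonneg _).trans (hcb i i i i (i, i) x)
  have hc : 0 ≤ c := (abs_nonneg _).trans (hcc i i i i (i, i, i) x)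
  have hb' : 0 ≤ b' := (abs_nonneg _).trans (hcb' i i i i i (i, i) x)
  have hc' : 0 ≤ c' := (abs_nonneg _).trans (hcc' i i i i i (i, i, i) x)
  have hd : 0 ≤ (d : ℝ) ^ 5 - (d : ℝ) ^ 4 :=
    sub_nonneg.2 (pow_le_pow_right₀ (by exact_mod_cast i.pos) (by norm_num))
  refine (hbr.abs_commutator_Lop_apply_le (hca · · · · · x) (hcb · · · · · x) (hcc · · · · · x)
    (hca' · · · · · · x) (hcb' · · · · · · x) (hcc' · · · · · · x) i j k f).trans ?_
  simp only [Fintype.sum_sum_type, sum_add_distrib]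
  have hP : 0 ≤ ∑ h, ∑ η : Fin d × Fin d, |e h (Yfields e (.inl η) f) x| := by positivity
  have hQ : 0 ≤ ∑ h, ∑ A : Fin d × Fin d × Fin d, |e h (Yfields e (.inr A) f) x| := by positivity
  have hS : 0 ≤ ∑ n, |e n f x| := by positivity
  have hU : 0 ≤ ∑ η : Fin d × Fin d, |Yfields e (.inl η) f x| := by positivity
  have hV : 0 ≤ ∑ A : Fin d × Fin d × Fin d, |Yfields e (.inr A) f x| := by positivity
  linarith [mul_nonneg hb hQ, mul_nonneg hc hP, mul_nonneg hb hU,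
    mul_nonneg (mul_nonneg (mul_nonneg ha hc) hS) hd,
    mul_nonneg (mul_nonneg (mul_nonneg hb hc) hU) hd,
    mul_nonneg (mul_nonneg (mul_nonneg hb hc) hV) (by positivity : (0 : ℝ) ≤ d ^ 5),
    mul_nonneg (mul_nonneg hb' hV) (by positivity : (0 : ℝ) ≤ d),
    mul_nonneg (mul_nonneg hc' hU) (by positivity : (0 : ℝ) ≤ d),
    mul_nonneg (mul_nonneg (sq_nonneg c) hU) (by positivity : (0 : ℝ) ≤ d ^ 4)]
end
end
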